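/- arXiv:1912.09422 — 6 statements merged into one kernel-verified Lean document; each statement's English description precedes it below -/
import Mathlib

section
/- Let G1 and G2 be weighted cubic trees whose leaf sets are labeled by the same finite set L, via bijections ℓ1 from L onto the leaves of G1 and ℓ2 from L onto the leaves of G2. If the leaf distances agree, i.e. d1(ℓ1(i), ℓ1(j)) = d2(ℓ2(i), ℓ2(j)) for all i, j in L, then there exists a graph isomorphism φ from G1 to G2 that maps ℓ1(i) to ℓ2(i) for every i in L and preserves edge weights (the weight of every edge e of G1 equals the weight of the edge φ(e) of G2). -/
/-- A weighted cubic tree: a finite connected acyclic simple graph in which every vertex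
has degree 1 or 3, with a strictly positive real weight on each edge. -/
structure WCubicTree where
  V : Type
  [fintypeV : Fintype V]
  [decEqV : DecidableEq V]
  G : SimpleGraph V
  [decAdj : DecidableRel G.Adj]
  connected : G.Connected
  acyclic : G.IsAcyclic
  cubic : ∀ v : V, G.degree v = 1 ∨ G.degree v = 3
  w : Sym2 V → ℝ
  w_pos : ∀ e ∈ G.edgeSet, 0 < w e

attribute [instance] WCubicTree.fintypeV WCubicTree.decEqV WCubicTree.decAdj

/-- A leaf is a vertex of degree 1. -/
def WCubicTree.IsLeaf (T : WCubicTree) (v : T.V) : Prop := T.G.degree v = 1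

/-- Some walk between two vertices, which exists by connectedness. -/
noncomputable def WCubicTree.walk (T : WCubicTree) (u v : T.V) : T.G.Walk u v :=
  Classical.choice (T.connected.preconnected u v)

/-- The distance between two vertices: the sum of the weights of the edges of the
(unique, by acyclicity) path joining them. -/
noncomputable def WCubicTree.dist (T : WCubicTree) (u v : T.V) : ℝ :=
  (((T.walk u v).toPath : T.G.Path u v).val.edges.map T.w).sum

/-!
In a tree with positive edge weights, `z` lies on the path from `u` to `v` exactly when
`d(u, z) + d(z, v) = d(u, v)`, so adjacency and edge weights can be read off the metric.
Every vertex `u` of a cubic tree is the median of three leaves `a, b, c` (follow the three edges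
at `u` out to leaves), and then for every vertex `x`, `2 d(x, u)` is the largest of the three
numbers `d(x, a) + d(x, b) - d(a, b)`, `d(x, a) + d(x, c) - d(a, c)`, `d(x, b) + d(x, c) - d(b, c)`.
Hence the median of the corresponding leaves of the other tree has the same distances to all
labelled leaves. These leaf distances determine the vertex, and even the distance between two
vertices, since for all `u, v` some leaf `x` has `d(x, v) = d(x, u) + d(u, v)`. Matching vertices
with equal leaf distances is therefore an isometry, hence a weight-preserving isomorphism.
-/

namespace SimpleGraph

variable {V : Type*} {G : SimpleGraph V} {u v w : V}

lemma Walk.IsPath.append_of_inter_support {p : G.Walk u v} {q : G.Walk v w} (hp : p.IsPath)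
    (hq : q.IsPath) (h : ∀ x ∈ p.support, x ∈ q.support → x = v) : (p.append q).IsPath := by
  refine Walk.IsPath.mk' ?_
  rw [Walk.support_append]
  have hv : v ∉ q.support.tail := by
    have := hq.support_nodup
    rw [← q.cons_tail_support] at this
    exact (List.nodup_cons.mp this).1
  refine hp.support_nodup.append hq.support_nodup.tail fun x hxp hxq => ?_
  exact hv (h x hxp (List.mem_of_mem_tail hxq) ▸ hxq)

lemma IsAcyclic.exists_adj_notMem_support [Fintype (G.neighborSet v)] (hG : G.IsAcyclic)
    {p : G.Walk u v} (hp : p.IsPath) (hv : 2 ≤ G.degree v) :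
    ∃ w, G.Adj v w ∧ w ∉ p.support := by
  by_contra! h
  have hsub : G.neighborFinset v ⊆ {p.penultimate} := fun w hw => by
    rw [mem_neighborFinset] at hw
    exact Finset.mem_singleton.mpr (hG.eq_penultimate_of_adj_end hp hw (h w hw))
  have := Finset.card_le_card hsub
  rw [card_neighborFinset_eq_degree, Finset.card_singleton] at this
  omega

end SimpleGraph

namespace WCubicTree

open SimpleGraph

noncomputable def path (T : WCubicTree) (u v : T.V) : T.G.Walk u v :=
  ((T.walk u v).toPath : T.G.Path u v).val

variable {T T' : WCubicTree}

lemma isPath_path (u v : T.V) : (T.path u v).IsPath :=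
  ((T.walk u v).toPath : T.G.Path u v).property

lemma eq_path {u v : T.V} {p : T.G.Walk u v} (hp : p.IsPath) : p = T.path u v :=
  congrArg Subtype.val ((T.acyclic.subsingleton_path u v).elim ⟨p, hp⟩ ⟨_, isPath_path u v⟩)

lemma dist_eq_sum {u v : T.V} {p : T.G.Walk u v} (hp : p.IsPath) :
    T.dist u v = (p.edges.map T.w).sum := by
  rw [eq_path hp]
  rfl

lemma dist_self (u : T.V) : T.dist u u = 0 := by
  simp [dist_eq_sum (Walk.IsPath.nil (u := u))]

lemma dist_comm (u v : T.V) : T.dist u v = T.dist v u := by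
  rw [dist_eq_sum (isPath_path v u).reverse, Walk.edges_reverse, List.map_reverse,
    List.sum_reverse]
  rfl

lemma dist_pos {u v : T.V} (h : u ≠ v) : 0 < T.dist u v := by
  refine List.sum_pos _ (fun x hx => ?_) ?_
  · obtain ⟨e, he, rfl⟩ := List.mem_map.mp hx
    exact T.w_pos e ((T.path u v).edges_subset_edgeSet he)
  · simpa [Walk.edges_eq_nil] using Walk.not_nil_of_ne h

lemma dist_nonneg (u v : T.V) : 0 ≤ T.dist u v :=
  (eq_or_ne u v).elim (fun h => h ▸ (dist_self u).ge) fun h => (dist_pos h).le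

lemma dist_eq_zero_iff {u v : T.V} : T.dist u v = 0 ↔ u = v :=
  ⟨fun h => by_contra fun hne => (dist_pos hne).ne' h, fun h => h ▸ dist_self u⟩

lemma dist_of_adj {u v : T.V} (h : T.G.Adj u v) : T.dist u v = T.w s(u, v) := by
  simp [dist_eq_sum (Path.singleton h).isPath]

lemma support_path_of_adj {u v : T.V} (h : T.G.Adj u v) : (T.path u v).support = [u, v] := by
  rw [← eq_path (Path.singleton h).isPath]
  rfl

lemma takeUntil_path {u v z : T.V} (hz : z ∈ (T.path u v).support) :
    (T.path u v).takeUntil z hz = T.path u z :=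
  eq_path ((isPath_path u v).takeUntil hz)

lemma dropUntil_path {u v z : T.V} (hz : z ∈ (T.path u v).support) :
    (T.path u v).dropUntil z hz = T.path z v :=
  eq_path ((isPath_path u v).dropUntil hz)

lemma mem_support_path_comm {u v z : T.V} :
    z ∈ (T.path u v).support ↔ z ∈ (T.path v u).support := by
  rw [← eq_path (isPath_path v u).reverse, Walk.support_reverse, List.mem_reverse]

lemma dist_add_dist_of_mem_support {u v z : T.V} (hz : z ∈ (T.path u v).support) :
    T.dist u z + T.dist z v = T.dist u v := by
  rw [dist_eq_sum ((isPath_path u v).takeUntil hz),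
    dist_eq_sum ((isPath_path u v).dropUntil hz), ← List.sum_append, ← List.map_append,
    ← Walk.edges_append, Walk.take_spec, dist_eq_sum (isPath_path u v)]

lemma support_path_subset_left {u v m : T.V} (hm : m ∈ (T.path u v).support) :
    (T.path u m).support ⊆ (T.path u v).support := by
  rw [← takeUntil_path hm]
  exact (T.path u v).support_takeUntil_subset_support hm

lemma support_path_subset_right {u v m : T.V} (hm : m ∈ (T.path u v).support) :
    (T.path m v).support ⊆ (T.path u v).support := by
  rw [← dropUntil_path hm]
  exact (T.path u v).support_dropUntil_subset_support hm

lemma mem_support_path_or {u v z : T.V} (hz : z ∈ (T.path u v).support) (x : T.V) :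
    z ∈ (T.path x u).support ∨ z ∈ (T.path x v).support := by
  rw [← eq_path ((T.path u x).append (T.path x v)).bypass_isPath] at hz
  rw [← mem_support_path_comm, ← Walk.mem_support_append_iff]
  exact Walk.support_bypass_subset_support _ hz

lemma exists_median (a b c : T.V) : ∃ m, m ∈ (T.path a b).support ∧
    m ∈ (T.path a c).support ∧ m ∈ (T.path b c).support := by
  classical
  obtain ⟨m, hmS, hmax⟩ := ((T.path a b).support.toFinset ∩ (T.path a c).support.toFinset
    ).exists_max_image (T.dist a) ⟨a, by simp⟩
  simp only [Finset.mem_inter, List.mem_toFinset, and_imp] at hmS hmax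
  obtain ⟨hmb, hmc⟩ := hmS
  -- being furthest from `a` among the common vertices, `m` is the only one shared beyond it
  have hsep : ∀ z ∈ (T.path m b).support, z ∈ (T.path m c).support → z = m := by
    intro z hzb hzc
    have hzb' := support_path_subset_right hmb hzb
    have hle := hmax z hzb' (support_path_subset_right hmc hzc)
    have h1 := dist_add_dist_of_mem_support hzb'
    have h2 := dist_add_dist_of_mem_support hzb
    have h3 := dist_add_dist_of_mem_support hmb
    exact (dist_eq_zero_iff.mp (by linarith [dist_nonneg m z] : T.dist m z = 0)).symm
  have hp := (isPath_path m b).reverse.append_of_inter_support (isPath_path m c)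
    fun z hzb hzc => hsep z (by simpa using hzb) hzc
  refine ⟨m, hmb, hmc, ?_⟩
  rw [← eq_path hp]
  simp

lemma mem_support_path_iff {u v z : T.V} :
    z ∈ (T.path u v).support ↔ T.dist u z + T.dist z v = T.dist u v := by
  refine ⟨dist_add_dist_of_mem_support, fun h => ?_⟩
  obtain ⟨m, hm, hmu, hmv⟩ := exists_median u v z
  have e1 := dist_add_dist_of_mem_support hm
  have e2 := dist_add_dist_of_mem_support hmu
  have e3 := dist_add_dist_of_mem_support hmv
  have : T.dist m z = 0 := by linarith [dist_comm v m, dist_comm z v, dist_nonneg m z]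
  rwa [← dist_eq_zero_iff.mp this]

lemma dist_triangle (u v z : T.V) : T.dist u v ≤ T.dist u z + T.dist z v := by
  obtain ⟨m, hm, hmu, hmv⟩ := exists_median u v z
  have e1 := dist_add_dist_of_mem_support hm
  have e2 := dist_add_dist_of_mem_support hmu
  have e3 := dist_add_dist_of_mem_support hmv
  linarith [dist_comm v m, dist_comm z v, dist_nonneg m z]

lemma adj_iff {u v : T.V} : T.G.Adj u v ↔
    u ≠ v ∧ ∀ z, T.dist u z + T.dist z v = T.dist u v → z = u ∨ z = v := by
  refine ⟨fun h => ⟨h.ne, fun z hz => ?_⟩, fun ⟨hne, h⟩ => ?_⟩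
  · simpa [support_path_of_adj h] using mem_support_path_iff.mpr hz
  · have hnil : ¬(T.path u v).Nil := Walk.not_nil_of_ne hne
    have hsnd := (T.path u v).adj_snd hnil
    rcases h _ (mem_support_path_iff.mp (List.mem_of_mem_tail (Walk.snd_mem_tail_support hnil)))
      with hu | hv
    · exact absurd hu hsnd.ne'
    · exact hv ▸ hsnd

lemma eq_of_adj_of_mem_support_path {u x n n' : T.V} (hn : T.G.Adj u n) (hn' : T.G.Adj u n')
    (h : n ∈ (T.path u x).support) (h' : n' ∈ (T.path u x).support) : n = n' :=
  (T.acyclic.eq_snd_of_adj_start (isPath_path u x) hn h).trans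
    (T.acyclic.eq_snd_of_adj_start (isPath_path u x) hn' h').symm

lemma exists_leaf_beyond (u v : T.V) : ∃ x, T.IsLeaf x ∧ u ∈ (T.path v x).support := by
  classical
  obtain ⟨x, hxu, hmax⟩ := (Finset.univ.filter fun x => u ∈ (T.path v x).support
    ).exists_max_image (T.dist v) ⟨u, by simp⟩
  simp only [Finset.mem_filter, Finset.mem_univ, true_and] at hxu hmax
  refine ⟨x, (T.cubic x).resolve_right fun h3 => ?_, hxu⟩
  obtain ⟨y, hxy, hy⟩ := T.acyclic.exists_adj_notMem_support (isPath_path v x) (by omega)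
  have hpath := eq_path ((isPath_path v x).concat hy hxy)
  have hx : x ∈ (T.path v y).support := by simp [← hpath, Walk.support_concat]
  have huy : u ∈ (T.path v y).support := by simp [← hpath, Walk.support_concat, hxu]
  linarith [hmax y huy, dist_add_dist_of_mem_support hx, dist_pos hxy.ne]

lemma mem_support_path_of_adj_of_ne {u n n' x x' : T.V} (hn : T.G.Adj u n)
    (hn' : T.G.Adj u n') (hne : n ≠ n') (hx : n ∈ (T.path u x).support)
    (hx' : n' ∈ (T.path u x').support) : u ∈ (T.path x x').support := by
  obtain ⟨m, hmx, hmx', hm⟩ := exists_median u x x'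
  obtain rfl | hmu := eq_or_ne m u
  · exact hm
  -- the first step from `u` towards `m` is the first step towards both `x` and `x'`
  have hnil : ¬(T.path u m).Nil := Walk.not_nil_of_ne hmu.symm
  have hs := List.mem_of_mem_tail (Walk.snd_mem_tail_support hnil)
  have hsn := eq_of_adj_of_mem_support_path (Walk.adj_snd hnil) hn
    (support_path_subset_left hmx hs) hx
  have hsn' := eq_of_adj_of_mem_support_path (Walk.adj_snd hnil) hn'
    (support_path_subset_left hmx' hs) hx'
  exact absurd (hsn.symm.trans hsn') hne

lemma exists_leaf_median (u : T.V) : ∃ a b c, T.IsLeaf a ∧ T.IsLeaf b ∧ T.IsLeaf c ∧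
    u ∈ (T.path a b).support ∧ u ∈ (T.path a c).support ∧ u ∈ (T.path b c).support := by
  rcases T.cubic u with h1 | h3
  · exact ⟨u, u, u, h1, h1, h1, by simp⟩
  obtain ⟨n₁, n₂, n₃, h₁₂, h₁₃, h₂₃, hN⟩ :=
    Finset.card_eq_three.mp (h3 ▸ T.G.card_neighborFinset_eq_degree u)
  have hadj : ∀ n ∈ ({n₁, n₂, n₃} : Finset T.V), T.G.Adj u n :=
    fun n hn => (T.G.mem_neighborFinset u n).mp (hN ▸ hn)
  simp only [Finset.mem_insert, Finset.mem_singleton, forall_eq_or_imp, forall_eq] at hadj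
  obtain ⟨a₁, a₂, a₃⟩ := hadj
  obtain ⟨x₁, hl₁, hx₁⟩ := exists_leaf_beyond n₁ u
  obtain ⟨x₂, hl₂, hx₂⟩ := exists_leaf_beyond n₂ u
  obtain ⟨x₃, hl₃, hx₃⟩ := exists_leaf_beyond n₃ u
  exact ⟨x₁, x₂, x₃, hl₁, hl₂, hl₃, mem_support_path_of_adj_of_ne a₁ a₂ h₁₂ hx₁ hx₂,
    mem_support_path_of_adj_of_ne a₁ a₃ h₁₃ hx₁ hx₃,
    mem_support_path_of_adj_of_ne a₂ a₃ h₂₃ hx₂ hx₃⟩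

lemma dist_add_dist_sub_dist_le {y z m : T.V} (hm : m ∈ (T.path y z).support) (x : T.V) :
    T.dist x y + T.dist x z - T.dist y z ≤ 2 * T.dist x m := by
  linarith [dist_add_dist_of_mem_support hm, dist_triangle x y m, dist_triangle x z m,
    dist_comm m z, dist_comm y m]

lemma dist_add_dist_sub_dist_eq {x y z m : T.V} (hm : m ∈ (T.path y z).support)
    (hy : m ∈ (T.path x y).support) (hz : m ∈ (T.path x z).support) :
    T.dist x y + T.dist x z - T.dist y z = 2 * T.dist x m := by
  linarith [dist_add_dist_of_mem_support hm, dist_add_dist_of_mem_support hy,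
    dist_add_dist_of_mem_support hz, dist_comm y m]

lemma two_mul_dist_median {a b c m : T.V} (hab : m ∈ (T.path a b).support)
    (hac : m ∈ (T.path a c).support) (hbc : m ∈ (T.path b c).support) (x : T.V) :
    2 * T.dist x m = max (max (T.dist x a + T.dist x b - T.dist a b)
      (T.dist x a + T.dist x c - T.dist a c)) (T.dist x b + T.dist x c - T.dist b c) := by
  refine le_antisymm ?_ (max_le (max_le (dist_add_dist_sub_dist_le hab x)
    (dist_add_dist_sub_dist_le hac x)) (dist_add_dist_sub_dist_le hbc x))
  -- `m` lies on the paths from `x` to at least two of `a, b, c`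
  simp only [le_max_iff]
  rcases mem_support_path_or hab x with ha | hb
  · rcases mem_support_path_or hbc x with hb | hc
    · exact .inl (.inl (dist_add_dist_sub_dist_eq hab ha hb).ge)
    · exact .inl (.inr (dist_add_dist_sub_dist_eq hac ha hc).ge)
  · rcases mem_support_path_or hac x with ha | hc
    · exact .inl (.inl (dist_add_dist_sub_dist_eq hab ha hb).ge)
    · exact .inr (dist_add_dist_sub_dist_eq hbc hb hc).ge

variable {L : Type}

noncomputable def leafDists (T : WCubicTree) (ℓ : L → T.V) (u : T.V) : L → ℝ :=
  fun i => T.dist (ℓ i) u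

variable {ℓ : L → T.V} {ℓ' : L → T'.V}

lemma dist_le_of_leafDists_eq (hℓ : ∀ v, T.IsLeaf v → ∃ i, ℓ i = v) {u v : T.V}
    {u' v' : T'.V} (hu : leafDists T' ℓ' u' = leafDists T ℓ u)
    (hv : leafDists T' ℓ' v' = leafDists T ℓ v) : T.dist u v ≤ T'.dist u' v' := by
  obtain ⟨x, hx, hux⟩ := exists_leaf_beyond u v
  obtain ⟨i, rfl⟩ := hℓ x hx
  -- `d(u, v) = d(ℓ i, v) - d(ℓ i, u)`, and the right-hand side is bounded by `d'(u', v')`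
  have hui : T'.dist (ℓ' i) u' = T.dist (ℓ i) u := congrFun hu i
  have hvi : T'.dist (ℓ' i) v' = T.dist (ℓ i) v := congrFun hv i
  linarith [dist_add_dist_of_mem_support hux,
    dist_triangle (ℓ' i) v' u', dist_comm v u, dist_comm u (ℓ i), dist_comm v (ℓ i)]

lemma dist_eq_of_leafDists_eq (hℓ : ∀ v, T.IsLeaf v → ∃ i, ℓ i = v)
    (hℓ' : ∀ v, T'.IsLeaf v → ∃ i, ℓ' i = v) {u v : T.V} {u' v' : T'.V}
    (hu : leafDists T' ℓ' u' = leafDists T ℓ u) (hv : leafDists T' ℓ' v' = leafDists T ℓ v) :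
    T'.dist u' v' = T.dist u v :=
  (dist_le_of_leafDists_eq hℓ' hu.symm hv.symm).antisymm (dist_le_of_leafDists_eq hℓ hu hv)

lemma leafDists_injective (hℓ : ∀ v, T.IsLeaf v → ∃ i, ℓ i = v) :
    Function.Injective (leafDists T ℓ) := fun u u' h => by
  have := dist_eq_of_leafDists_eq hℓ hℓ h (rfl : leafDists T ℓ u' = _)
  rw [dist_self] at this
  exact dist_eq_zero_iff.mp this

lemma exists_leafDists_eq (hℓ : ∀ v, T.IsLeaf v → ∃ i, ℓ i = v)
    (hd : ∀ i j, T'.dist (ℓ' i) (ℓ' j) = T.dist (ℓ i) (ℓ j)) (u : T.V) :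
    ∃ u' : T'.V, leafDists T' ℓ' u' = leafDists T ℓ u := by
  obtain ⟨a, b, c, ha, hb, hc, hab, hac, hbc⟩ := exists_leaf_median u
  obtain ⟨i, rfl⟩ := hℓ a ha
  obtain ⟨j, rfl⟩ := hℓ b hb
  obtain ⟨k, rfl⟩ := hℓ c hc
  obtain ⟨m, hab', hac', hbc'⟩ := exists_median (ℓ' i) (ℓ' j) (ℓ' k)
  refine ⟨m, funext fun n => ?_⟩
  have h := two_mul_dist_median hab hac hbc (ℓ n)
  have h' := two_mul_dist_median hab' hac' hbc' (ℓ' n)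
  simp only [hd] at h'
  simp only [leafDists]
  linarith

def isoOfDistEq (e : T.V ≃ T'.V) (he : ∀ u v, T'.dist (e u) (e v) = T.dist u v) :
    T.G ≃g T'.G where
  toEquiv := e
  map_rel_iff' {u v} := by
    rw [adj_iff, adj_iff, ← e.forall_congr_right]
    simp [he]

lemma w_map_isoOfDistEq (e : T.V ≃ T'.V) (he : ∀ u v, T'.dist (e u) (e v) = T.dist u v) :
    ∀ ed ∈ T.G.edgeSet, T'.w (Sym2.map (isoOfDistEq e he) ed) = T.w ed := by
  intro ed hed
  induction ed using Sym2.ind with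
  | _ u v =>
    rw [Sym2.map_mk, ← dist_of_adj ((isoOfDistEq e he).map_adj_iff.mpr hed),
      ← dist_of_adj hed]
    exact he u v

end WCubicTree

theorem tree_determined_by_leaf_metric_general
    (T1 T2 : WCubicTree) (L : Type)
    (ℓ1 : L → T1.V) (ℓ2 : L → T2.V)
    (h1surj : ∀ v, T1.IsLeaf v → ∃ i, ℓ1 i = v)
    (h2surj : ∀ v, T2.IsLeaf v → ∃ i, ℓ2 i = v)
    (hdist : ∀ i j, T1.dist (ℓ1 i) (ℓ1 j) = T2.dist (ℓ2 i) (ℓ2 j)) :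
    ∃ φ : T1.G ≃g T2.G,
      (∀ i, φ (ℓ1 i) = ℓ2 i) ∧
      ∀ e ∈ T1.G.edgeSet, T2.w (Sym2.map (⇑φ) e) = T1.w e := by
  open WCubicTree in
  choose f hf using exists_leafDists_eq h1surj fun i j => (hdist i j).symm
  choose g hg using exists_leafDists_eq h2surj hdist
  have hgf (u : T1.V) : g (f u) = u := leafDists_injective h1surj (by rw [hg, hf])
  have hfg (v : T2.V) : f (g v) = v := leafDists_injective h2surj (by rw [hf, hg])
  have hfℓ (i : L) : f (ℓ1 i) = ℓ2 i :=
    leafDists_injective h2surj (by rw [hf]; exact funext fun j => hdist j i)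
  let e : T1.V ≃ T2.V := ⟨f, g, hgf, hfg⟩
  have he (u v : T1.V) : T2.dist (e u) (e v) = T1.dist u v :=
    dist_eq_of_leafDists_eq h1surj h2surj (hf u) (hf v)
  exact ⟨isoOfDistEq e he, hfℓ, w_map_isoOfDistEq e he⟩

/-- If two weighted cubic trees, with leaves labeled by the same finite set `L`, have equal
leaf distances, then there is a graph isomorphism between them preserving the leaf labels
and the edge weights. -/
theorem tree_determined_by_leaf_metric
    (T1 T2 : WCubicTree) (L : Type) [Fintype L]
    (ℓ1 : L → T1.V) (ℓ2 : L → T2.V)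
    (h1inj : Function.Injective ℓ1) (h2inj : Function.Injective ℓ2)
    (h1leaf : ∀ i, T1.IsLeaf (ℓ1 i)) (h2leaf : ∀ i, T2.IsLeaf (ℓ2 i))
    (h1surj : ∀ v, T1.IsLeaf v → ∃ i, ℓ1 i = v)
    (h2surj : ∀ v, T2.IsLeaf v → ∃ i, ℓ2 i = v)
    (hdist : ∀ i j, T1.dist (ℓ1 i) (ℓ1 j) = T2.dist (ℓ2 i) (ℓ2 j)) :
    ∃ φ : T1.G ≃g T2.G,
      (∀ i, φ (ℓ1 i) = ℓ2 i) ∧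
      ∀ e ∈ T1.G.edgeSet, T2.w (Sym2.map (⇑φ) e) = T1.w e :=
  tree_determined_by_leaf_metric_general T1 T2 L ℓ1 ℓ2 h1surj h2surj hdist
end

section
/- Let n ≥ 1, let v : Fin n → ℝⁿ be a family of linearly independent vectors (hence a basis of ℝⁿ), and let T ∈ ℝⁿ satisfy ⟨v i, T⟩ > 0 for every i. Let C = { Σᵢ βᵢ · v i : βᵢ > 0 for all i } be the open simplicial cone spanned by the v i. Then the integral over C with respect to Lebesgue measure of the function F ↦ exp(−⟨F, T⟩) equals |det M| / Πᵢ ⟨v i, T⟩, where M is the n × n matrix whose i-th row is v i. -/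
/-!
The map `β ↦ ∑ i, β i • v i` is the linear map of the matrix `Mᵀ`; it is injective since the
`v i` are independent, and it carries the open positive orthant onto the cone. Changing variables
multiplies the integrand by `|det M|` and turns `exp (-⟪F, T⟫)` into
`∏ i, exp (-β i * ⟪v i, T⟫)`, so Fubini splits the orthant integral into the one-dimensional
integrals `∫₀^∞ exp (-t c) dt = c⁻¹` with `c = ⟪v i, T⟫ > 0`.
-/

open MeasureTheory Set
open scoped RealInnerProductSpace Matrix

theorem integral_exp_neg_mul_Ioi_zero {c : ℝ} (hc : 0 < c) :
    ∫ x in Ioi (0 : ℝ), Real.exp (-(x * c)) = c⁻¹ := by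
  simpa [mul_comm, neg_div, div_neg] using integral_exp_mul_Ioi (neg_lt_zero.2 hc) 0

theorem integral_univ_pi_Ioi_exp_neg_sum {ι : Type*} [Fintype ι] {c : ι → ℝ}
    (hc : ∀ i, 0 < c i) :
    ∫ x in univ.pi fun _ => Ioi (0 : ℝ), Real.exp (-∑ i, x i * c i) = ∏ i, (c i)⁻¹ := by
  rw [volume_pi, Measure.restrict_pi_pi]
  simp_rw [← Finset.sum_neg_distrib, Real.exp_sum]
  rw [integral_fintype_prod_eq_prod (fun i x => Real.exp (-(x * c i)))]
  exact Finset.prod_congr rfl fun i _ => integral_exp_neg_mul_Ioi_zero (hc i)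

theorem EuclideanSpace.integral_pos_orthant_exp_neg_sum {ι : Type*} [Fintype ι] {c : ι → ℝ}
    (hc : ∀ i, 0 < c i) :
    ∫ x in {x : EuclideanSpace ℝ ι | ∀ i, 0 < x i}, Real.exp (-∑ i, x i * c i) =
      ∏ i, (c i)⁻¹ := by
  rw [← integral_univ_pi_Ioi_exp_neg_sum hc,
    ← (PiLp.volume_preserving_ofLp ι).setIntegral_preimage_emb
      (MeasurableEquiv.toLp 2 (ι → ℝ)).symm.measurableEmbedding]
  congr 2
  ext x
  simp

theorem setIntegral_image_linearMap {E F : Type*} [NormedAddCommGroup E] [NormedSpace ℝ E]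
    [FiniteDimensional ℝ E] [MeasurableSpace E] [BorelSpace E] [NormedAddCommGroup F]
    [NormedSpace ℝ F] (μ : Measure E) [μ.IsAddHaarMeasure] {L : E →ₗ[ℝ] E}
    (hL : Function.Injective L) {s : Set E} (hs : MeasurableSet s) (g : E → F) :
    ∫ x in L '' s, g x ∂μ = |LinearMap.det L| • ∫ x in s, g (L x) ∂μ := by
  rw [integral_image_eq_integral_abs_det_fderiv_smul μ hs (f := L)
    (fun x _ => (LinearMap.toContinuousLinearMap L).hasFDerivAt.hasFDerivWithinAt) hL.injOn,
    integral_smul]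
  rfl

def openSimplicialCone {ι E : Type*} [Fintype ι] [AddCommMonoid E] [Module ℝ E]
    (v : ι → E) : Set E :=
  {F | ∃ β : ι → ℝ, (∀ i, 0 < β i) ∧ F = ∑ i, β i • v i}

section

variable {ι : Type*} [Fintype ι] [DecidableEq ι]

theorem Matrix.toEuclideanLin_transpose_of_apply (v : ι → EuclideanSpace ℝ ι)
    (β : EuclideanSpace ℝ ι) :
    Matrix.toEuclideanLin (Matrix.of fun i j => v i j)ᵀ β = ∑ i, β i • v i := by
  ext j
  simp [Matrix.mulVec_transpose, Matrix.vecMul, dotProduct]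

theorem openSimplicialCone_eq_image (v : ι → EuclideanSpace ℝ ι) :
    openSimplicialCone v =
      Matrix.toEuclideanLin (Matrix.of fun i j => v i j)ᵀ '' {β | ∀ i, 0 < β i} := by
  ext F
  simp only [openSimplicialCone, Matrix.toEuclideanLin_transpose_of_apply]
  constructor
  · rintro ⟨β, hβ, rfl⟩
    exact ⟨WithLp.toLp 2 β, hβ, rfl⟩
  · rintro ⟨β, hβ, rfl⟩
    exact ⟨β, hβ, rfl⟩

theorem setIntegral_openSimplicialCone {v : ι → EuclideanSpace ℝ ι} (hv : LinearIndependent ℝ v)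
    (g : EuclideanSpace ℝ ι → ℝ) :
    ∫ F in openSimplicialCone v, g F =
      |(Matrix.of fun i j => v i j).det| * ∫ β in {β : EuclideanSpace ℝ ι | ∀ i, 0 < β i},
        g (∑ i, β i • v i) := by
  have hinj : Function.Injective (Matrix.toEuclideanLin (Matrix.of fun i j => v i j)ᵀ) :=
    fun a b h => WithLp.ofLp_injective 2 <|
      linearIndependent_iff_injective_fintypeLinearCombination.mp hv <| by
        simpa [Matrix.toEuclideanLin_transpose_of_apply, Fintype.linearCombination_apply] using h
  have hs : MeasurableSet {β : EuclideanSpace ℝ ι | ∀ i, 0 < β i} := by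
    measurability
  rw [openSimplicialCone_eq_image, setIntegral_image_linearMap volume hinj hs,
    LinearMap.det_toLpLin, Matrix.det_transpose, smul_eq_mul]
  simp only [Matrix.toEuclideanLin_transpose_of_apply]

end

theorem integral_exp_over_simplicial_cone_general
    (n : ℕ)
    (v : Fin n → EuclideanSpace ℝ (Fin n))
    (hv : LinearIndependent ℝ v)
    (T : EuclideanSpace ℝ (Fin n))
    (hT : ∀ i, 0 < ⟪v i, T⟫) :
    (∫ F in {F : EuclideanSpace ℝ (Fin n) |
        ∃ β : Fin n → ℝ, (∀ i, 0 < β i) ∧ F = ∑ i, β i • v i},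
      Real.exp (-⟪F, T⟫))
    = |(Matrix.of fun i j => v i j).det| / ∏ i, ⟪v i, T⟫ := by
  change ∫ F in openSimplicialCone v, _ = _
  simp_rw [setIntegral_openSimplicialCone hv, sum_inner, real_inner_smul_left,
    EuclideanSpace.integral_pos_orthant_exp_neg_sum hT, Finset.prod_inv_distrib, div_eq_mul_inv]

/-- The integral of `exp (-⟪F, T⟫)` over the open simplicial cone spanned by a linearly
independent family `v` equals `|det M| / ∏ i, ⟪v i, T⟫`, where `M` has rows `v i`. -/
theorem integral_exp_over_simplicial_cone
    (n : ℕ) (hn : 1 ≤ n)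
    (v : Fin n → EuclideanSpace ℝ (Fin n))
    (hv : LinearIndependent ℝ v)
    (T : EuclideanSpace ℝ (Fin n))
    (hT : ∀ i, 0 < ⟪v i, T⟫) :
    (∫ F in {F : EuclideanSpace ℝ (Fin n) |
        ∃ β : Fin n → ℝ, (∀ i, 0 < β i) ∧ F = ∑ i, β i • v i},
      Real.exp (-⟪F, T⟫))
    = |(Matrix.of fun i j => v i j).det| / ∏ i, ⟪v i, T⟫ :=
  integral_exp_over_simplicial_cone_general n v hv T hT
end

section
/- Let n ≥ 1, let Z : Fin n → ℝⁿ be a basis of ℝⁿ, and let T = Σᵢ λᵢ · Z i with λᵢ > 0 for every i. Let Δ = { F ∈ ℝⁿ : ⟨F, Z i⟩ > 0 for all i }. Then the integral over Δ with respect to Lebesgue measure of F ↦ exp(−⟨F, T⟩) equals |det Z|^{n−1} / Πᵢ |det Zᵢ→T|, where det Z is the determinant of the matrix with rows Z 1, …, Z n, and Zᵢ→T is that matrix with its i-th row replaced by T. -/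
/-!
The linear substitution `y i = ⟪F, Z i⟫` maps the dual cone onto the positive orthant with
Jacobian `|det Z|`, and turns `⟪F, T⟫` into `∑ i, λ i * y i`; the orthant integral factors as
`∏ i, (λ i)⁻¹`. Since row `i` of `Z` replaced by `T` has determinant `λ i * det Z`, both sides
equal `(|det Z| * ∏ i, λ i)⁻¹`.
-/

open MeasureTheory Real Set
open scoped RealInnerProductSpace

theorem integral_exp_neg_mul_Ioi_zero_s4 {b : ℝ} (hb : 0 < b) :
    ∫ x in Ioi (0 : ℝ), exp (-(b * x)) = b⁻¹ := by
  simpa [neg_mul, div_neg, div_eq_inv_mul] using integral_exp_mul_Ioi (neg_lt_zero.2 hb) 0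

theorem setIntegral_preimage_linearMap {E G : Type*} [NormedAddCommGroup E] [NormedSpace ℝ E]
    [MeasurableSpace E] [BorelSpace E] [FiniteDimensional ℝ E] [NormedAddCommGroup G]
    [NormedSpace ℝ G] (μ : Measure E) [μ.IsAddHaarMeasure] {f : E →ₗ[ℝ] E}
    (hf : LinearMap.det f ≠ 0) (g : E → G) (s : Set E) :
    ∫ x in f ⁻¹' s, g (f x) ∂μ = |LinearMap.det f|⁻¹ • ∫ y in s, g y ∂μ := by
  have hinj : Function.Injective f :=
    ((Module.End.isUnit_iff f).1
      ((LinearMap.isUnit_iff_isUnit_det f).2 (isUnit_iff_ne_zero.2 hf))).injective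
  have hemb : MeasurableEmbedding f :=
    (f.isClosedEmbedding_of_injective (LinearMap.ker_eq_bot.2 hinj)).measurableEmbedding
  rw [← hemb.setIntegral_map, Measure.map_linearMap_addHaar_eq_smul_addHaar μ hf,
    Measure.restrict_smul, integral_smul_measure, abs_inv, ENNReal.toReal_ofReal (by positivity)]

section

variable {ι : Type*} [Fintype ι]

theorem setIntegral_univ_pi_Ioi_exp_neg_sum {lam : ι → ℝ} (hlam : ∀ i, 0 < lam i) :
    ∫ x in univ.pi (fun _ : ι ↦ Ioi (0 : ℝ)), exp (-∑ i, lam i * x i) = ∏ i, (lam i)⁻¹ := by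
  simp_rw [volume_pi, Measure.restrict_pi_pi, ← Finset.sum_neg_distrib, exp_sum]
  rw [integral_fintype_prod_eq_prod (fun i x ↦ exp (-(lam i * x)))]
  exact Finset.prod_congr rfl fun i _ ↦ integral_exp_neg_mul_Ioi_zero_s4 (hlam i)

theorem EuclideanSpace.setIntegral_orthant_exp_neg_sum {lam : ι → ℝ} (hlam : ∀ i, 0 < lam i) :
    ∫ y in {y : EuclideanSpace ℝ ι | ∀ i, 0 < y i}, exp (-∑ i, lam i * y i) = ∏ i, (lam i)⁻¹ := by
  rw [← (PiLp.volume_preserving_toLp ι).setIntegral_preimage_emb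
    (MeasurableEquiv.toLp 2 (ι → ℝ)).measurableEmbedding]
  have hpre : WithLp.toLp 2 ⁻¹' {y : EuclideanSpace ℝ ι | ∀ i, 0 < y i}
      = univ.pi fun _ ↦ Ioi 0 := by
    ext x
    simp
  rw [hpre]
  exact setIntegral_univ_pi_Ioi_exp_neg_sum hlam

variable [DecidableEq ι]

theorem Matrix.det_of_ne_zero_of_linearIndependent {Z : ι → EuclideanSpace ℝ ι}
    (hZ : LinearIndependent ℝ Z) : (Matrix.of fun i j ↦ Z i j).det ≠ 0 := by
  have hrows : LinearIndependent ℝ (Matrix.of fun i j ↦ Z i j).row :=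
    hZ.map' (WithLp.linearEquiv 2 ℝ (ι → ℝ)).toLinearMap (LinearEquiv.ker _)
  exact ((Matrix.linearIndependent_rows_iff_isUnit.1 hrows).map Matrix.detMonoidHom).ne_zero

theorem Matrix.toLpLin_of_apply (Z : ι → EuclideanSpace ℝ ι) (F : EuclideanSpace ℝ ι) (i : ι) :
    Matrix.toLpLin 2 2 (Matrix.of fun i j ↦ Z i j) F i = ⟪F, Z i⟫ := by
  simp [Matrix.mulVec, dotProduct, PiLp.inner_apply, mul_comm]

theorem Matrix.det_updateRow_of_eq_sum {Z : ι → EuclideanSpace ℝ ι} {lam : ι → ℝ}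
    {T : EuclideanSpace ℝ ι} (hT : T = ∑ i, lam i • Z i) (i : ι) :
    ((Matrix.of fun i j ↦ Z i j).updateRow i (fun j ↦ T j)).det
      = lam i * (Matrix.of fun i j ↦ Z i j).det := by
  have hrow : (fun j ↦ T j) = ∑ k, lam k • (Matrix.of fun i j ↦ Z i j) k := by
    ext j
    simp [hT]
  rw [hrow, Matrix.det_updateRow_sum, smul_eq_mul]

end

/-- For a basis `Z` of `ℝⁿ` and `T = ∑ i, λ i • Z i` with all `λ i > 0`, the integral of
`exp (-⟪F, T⟫)` over `Δ = {F | ⟪F, Z i⟫ > 0 ∀ i}` equals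
`|det Z| ^ (n-1) / ∏ i, |det (Z with i-th row replaced by T)|`. -/
theorem integral_exp_over_dual_cone
    (n : ℕ) (hn : 1 ≤ n)
    (Z : Fin n → EuclideanSpace ℝ (Fin n))
    (hZ : LinearIndependent ℝ Z)
    (lam : Fin n → ℝ) (hlam : ∀ i, 0 < lam i)
    (T : EuclideanSpace ℝ (Fin n)) (hT : T = ∑ i, lam i • Z i) :
    (∫ F in {F : EuclideanSpace ℝ (Fin n) | ∀ i, 0 < ⟪F, Z i⟫},
      Real.exp (-⟪F, T⟫))
    = |(Matrix.of fun i j => Z i j).det| ^ (n - 1) /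
      ∏ i, |((Matrix.of fun i' j => Z i' j).updateRow i (fun j => T j)).det| := by
  simp_rw [Matrix.det_updateRow_of_eq_sum hT]
  set M : Matrix (Fin n) (Fin n) ℝ := Matrix.of fun i j ↦ Z i j
  have hM : M.det ≠ 0 := Matrix.det_of_ne_zero_of_linearIndependent hZ
  have hinner (F) (i) : ⟪F, Z i⟫ = M.toLpLin 2 2 F i := (Matrix.toLpLin_of_apply Z F i).symm
  have hT' (F) : ⟪F, T⟫ = ∑ i, lam i * M.toLpLin 2 2 F i := by
    simp only [hT, inner_sum, real_inner_smul_right, hinner]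
  calc (∫ F in {F : EuclideanSpace ℝ (Fin n) | ∀ i, 0 < ⟪F, Z i⟫}, exp (-⟪F, T⟫))
      = ∫ F in M.toLpLin 2 2 ⁻¹' {y | ∀ i, 0 < y i}, exp (-∑ i, lam i * M.toLpLin 2 2 F i) := by
        simp only [hT', hinner]; rfl
    _ = |LinearMap.det (M.toLpLin 2 2)|⁻¹ •
          ∫ y in {y : EuclideanSpace ℝ (Fin n) | ∀ i, 0 < y i}, exp (-∑ i, lam i * y i) :=
        setIntegral_preimage_linearMap (f := M.toLpLin 2 2) volume
          (by rwa [LinearMap.det_toLpLin]) (fun y ↦ exp (-∑ i, lam i * y i)) _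
    _ = |M.det|⁻¹ * ∏ i, (lam i)⁻¹ := by
        rw [LinearMap.det_toLpLin, EuclideanSpace.setIntegral_orthant_exp_neg_sum hlam,
          smul_eq_mul]
    _ = |M.det| ^ (n - 1) / ∏ i, |lam i * M.det| := by
        obtain ⟨m, rfl⟩ : ∃ m, n = m + 1 := ⟨n - 1, by omega⟩
        simp only [abs_mul, abs_of_pos (hlam _), Finset.prod_mul_distrib, Finset.prod_const,
          Finset.card_univ, Fintype.card_fin, Finset.prod_inv_distrib, Nat.add_sub_cancel, pow_succ]
        field_simp
end

section
/- In ℝ⁴ with coordinates (x, y, z, w), let Δ = { (x, y, z, w) : x ≥ 0, y ≥ 0, z ≥ 0, w ≥ 0, y − z + w ≥ 0, x − z + w ≥ 0 }, and set V0 = (0,0,1,1), V1 = (1,0,0,0), V2 = (1,1,1,0), V3 = (0,1,0,0), V4 = (0,0,0,1). Then Δ ∩ { z ≥ w } = { α·V0 + β·V1 + γ·V2 + δ·V3 : α, β, γ, δ ≥ 0 } and Δ ∩ { z ≤ w } = { α·V0 + β·V1 + δ·V3 + ε·V4 : α, β, δ, ε ≥ 0 }; in particular, Δ is the union of these two simplicial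 cones, whose intersection is contained in the hyperplane { z = w }. -/
/-- The cone of compatible metrics of the bipyramid collection for (3,6):
coordinates `(x, y, z, w) = (p 0, p 1, p 2, p 3)`, with the positivity conditions for the
dependent internal lengths `u = x + w - z` and `v = y + w - z`. -/
def bipDelta : Set (Fin 4 → ℝ) :=
  {p | 0 ≤ p 0 ∧ 0 ≤ p 1 ∧ 0 ≤ p 2 ∧ 0 ≤ p 3 ∧ 0 ≤ p 1 - p 2 + p 3 ∧ 0 ≤ p 0 - p 2 + p 3}

def bipV0 : Fin 4 → ℝ := ![0, 0, 1, 1]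
def bipV1 : Fin 4 → ℝ := ![1, 0, 0, 0]
def bipV2 : Fin 4 → ℝ := ![1, 1, 1, 0]
def bipV3 : Fin 4 → ℝ := ![0, 1, 0, 0]
def bipV4 : Fin 4 → ℝ := ![0, 0, 0, 1]

/-- The simplicial cone spanned (with nonnegative coefficients) by `V0, V1, V2, V3`. -/
def bipCone1 : Set (Fin 4 → ℝ) :=
  {q | ∃ α β γ δ : ℝ, 0 ≤ α ∧ 0 ≤ β ∧ 0 ≤ γ ∧ 0 ≤ δ ∧
    q = α • bipV0 + β • bipV1 + γ • bipV2 + δ • bipV3}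

/-- The simplicial cone spanned (with nonnegative coefficients) by `V0, V1, V3, V4`. -/
def bipCone2 : Set (Fin 4 → ℝ) :=
  {q | ∃ α β δ ε : ℝ, 0 ≤ α ∧ 0 ≤ β ∧ 0 ≤ δ ∧ 0 ≤ ε ∧
    q = α • bipV0 + β • bipV1 + δ • bipV3 + ε • bipV4}

/-! Each cone is the image of the nonnegative orthant under a unimodular linear map whose inverse
reads the coefficients `(w, x - z + w, z - w, y - z + w)`, resp. `(z, x, y, w - z)`, off a point
`(x, y, z, w)`; these are nonnegative exactly on `Δ ∩ {z ≥ w}`, resp. `Δ ∩ {z ≤ w}`. Splitting `Δ`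
by the sign of `z - w` gives the rest. -/

lemma smul_bipV0_add_smul_bipV1_add_smul_bipV2_add_smul_bipV3 (α β γ δ : ℝ) :
    α • bipV0 + β • bipV1 + γ • bipV2 + δ • bipV3 = ![β + γ, γ + δ, α + γ, α] := by
  ext i
  fin_cases i <;> simp [bipV0, bipV1, bipV2, bipV3]

lemma smul_bipV0_add_smul_bipV1_add_smul_bipV3_add_smul_bipV4 (α β δ ε : ℝ) :
    α • bipV0 + β • bipV1 + δ • bipV3 + ε • bipV4 = ![β, δ, α, α + ε] := by
  ext i
  fin_cases i <;> simp [bipV0, bipV1, bipV3, bipV4]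

lemma eq_vecCons_of_apply {α : Type*} {p : Fin 4 → α} {a b c d : α}
    (h0 : p 0 = a) (h1 : p 1 = b) (h2 : p 2 = c) (h3 : p 3 = d) : p = ![a, b, c, d] := by
  ext i
  fin_cases i <;> assumption

theorem bipDelta_inter_setOf_le_eq_bipCone1 : bipDelta ∩ {p | p 3 ≤ p 2} = bipCone1 := by
  ext p
  constructor
  · rintro ⟨⟨-, -, -, hw, hv, hu⟩, hwz : p 3 ≤ p 2⟩
    refine ⟨p 3, p 0 - p 2 + p 3, p 2 - p 3, p 1 - p 2 + p 3, hw, hu, sub_nonneg.2 hwz, hv, ?_⟩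
    rw [smul_bipV0_add_smul_bipV1_add_smul_bipV2_add_smul_bipV3]
    exact eq_vecCons_of_apply (by ring) (by ring) (by ring) rfl
  · rintro ⟨α, β, γ, δ, hα, hβ, hγ, hδ, rfl⟩
    rw [smul_bipV0_add_smul_bipV1_add_smul_bipV2_add_smul_bipV3]
    simp only [bipDelta, Set.mem_inter_iff, Set.mem_ofPred_eq, Matrix.cons_val]
    refine ⟨⟨?_, ?_, ?_, hα, ?_, ?_⟩, ?_⟩ <;> linarith

theorem bipDelta_inter_setOf_ge_eq_bipCone2 : bipDelta ∩ {p | p 2 ≤ p 3} = bipCone2 := by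
  ext p
  constructor
  · rintro ⟨⟨hx, hy, hz, -, -, -⟩, hzw : p 2 ≤ p 3⟩
    refine ⟨p 2, p 0, p 1, p 3 - p 2, hz, hx, hy, sub_nonneg.2 hzw, ?_⟩
    rw [smul_bipV0_add_smul_bipV1_add_smul_bipV3_add_smul_bipV4]
    exact eq_vecCons_of_apply rfl rfl rfl (by ring)
  · rintro ⟨α, β, δ, ε, hα, hβ, hδ, hε, rfl⟩
    rw [smul_bipV0_add_smul_bipV1_add_smul_bipV3_add_smul_bipV4]
    simp only [bipDelta, Set.mem_inter_iff, Set.mem_ofPred_eq, Matrix.cons_val]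
    refine ⟨⟨hβ, hδ, hα, ?_, ?_, ?_⟩, ?_⟩ <;> linarith

/-- `Δ ∩ {z ≥ w}` and `Δ ∩ {z ≤ w}` are the two simplicial cones of the triangulation of
the bipyramid; in particular `Δ` is their union and their intersection lies in `{z = w}`. -/
theorem bipyramid_triangulation :
    bipDelta ∩ {p | p 3 ≤ p 2} = bipCone1 ∧
    bipDelta ∩ {p | p 2 ≤ p 3} = bipCone2 ∧
    bipDelta = bipCone1 ∪ bipCone2 ∧
    bipCone1 ∩ bipCone2 ⊆ {p | p 2 = p 3} := by
  have halves : {p : Fin 4 → ℝ | p 3 ≤ p 2} ∪ {p | p 2 ≤ p 3} = Set.univ :=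
    Set.eq_univ_of_forall fun p ↦ le_total (p 3) (p 2)
  rw [← bipDelta_inter_setOf_le_eq_bipCone1, ← bipDelta_inter_setOf_ge_eq_bipCone2]
  refine ⟨rfl, rfl, ?_, ?_⟩
  · rw [← Set.inter_union_distrib_left, halves, Set.inter_univ]
  · exact fun p ⟨⟨_, hwz⟩, _, hzw⟩ ↦ le_antisymm hzw hwz
end

section
/- Let a, b, c, d be real numbers with a > 0, b > 0, d > 0, c + d > 0 and a + b + c > 0. Then the integral over the open cone { (x, y, z, w) ∈ ℝ⁴ : x > 0, y > 0, z > 0, w > 0, y − z + w > 0, x − z + w > 0 } of the function (x, y, z, w) ↦ exp(−(a·x + b·y + c·z + d·w)) with respect to Lebesgue measure equals 1/(a·b·(a + b + c)·(c + d)) + 1/(a·b·d·(c + d)). -/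
/-!
Up to the null hyperplane `z = w`, the cone splits into two unimodular simplicial cones:
`{z < w}`, with orthant coordinates `(x, y, z, w - z)`, and `{w < z}`, with orthant coordinates
`(x - z + w, y - z + w, z - w, w)`. On a cone `{p | 0 < N p}` with `|det N| = 1` the substitution
`q = N p` is volume preserving and turns `exp (-(k ⬝ᵥ p))` into `exp (-((k ᵥ* N⁻¹) ⬝ᵥ q))`, whose
integral over the positive orthant is `∏ i, (k ᵥ* N⁻¹) i⁻¹`. The two cones contribute
`1 / (a b (c + d) d)` and `1 / (a b (a + b + c) (c + d))`.
-/

open MeasureTheory Set Matrix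

section

variable {ι : Type*} [Fintype ι]

theorem Real.exp_neg_dotProduct (l q : ι → ℝ) :
    Real.exp (-(l ⬝ᵥ q)) = ∏ i, Real.exp (-l i * q i) := by
  simp only [dotProduct, ← Finset.sum_neg_distrib, Real.exp_sum, neg_mul]

theorem volume_restrict_pi_Ioi_zero :
    volume.restrict (univ.pi fun _ : ι => Ioi (0 : ℝ))
      = Measure.pi fun _ => volume.restrict (Ioi 0) := by
  rw [volume_pi, Measure.restrict_pi_pi]

theorem integrableOn_exp_neg_dotProduct_pi_Ioi {l : ι → ℝ} (hl : ∀ i, 0 < l i) :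
    IntegrableOn (fun q => Real.exp (-(l ⬝ᵥ q))) (univ.pi fun _ => Ioi 0) := by
  simp only [IntegrableOn, volume_restrict_pi_Ioi_zero, Real.exp_neg_dotProduct]
  exact Integrable.fintype_prod fun i => exp_neg_integrableOn_Ioi 0 (hl i)

theorem integral_exp_neg_dotProduct_pi_Ioi {l : ι → ℝ} (hl : ∀ i, 0 < l i) :
    ∫ q in univ.pi (fun _ => Ioi 0), Real.exp (-(l ⬝ᵥ q)) = ∏ i, (l i)⁻¹ := by
  simp only [volume_restrict_pi_Ioi_zero, Real.exp_neg_dotProduct]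
  rw [integral_fintype_prod_eq_prod (fun i x => Real.exp (-l i * x))]
  refine Finset.prod_congr rfl fun i _ => ?_
  rw [integral_exp_mul_Ioi (neg_neg_of_pos (hl i)), mul_zero, Real.exp_zero, div_neg, neg_div,
    neg_neg, one_div]

theorem volume_setOf_apply_eq_apply {i j : ι} (hij : i ≠ j) :
    volume {p : ι → ℝ | p i = p j} = 0 := by
  classical
  let L : (ι → ℝ) →ₗ[ℝ] ℝ := LinearMap.proj (R := ℝ) (φ := fun _ : ι => ℝ) i - LinearMap.proj j
  have hker : {p : ι → ℝ | p i = p j} = LinearMap.ker L := by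
    ext p; simp [L, sub_eq_zero]
  rw [hker]
  refine Measure.addHaar_submodule _ _ fun htop => ?_
  have hsingle : (Pi.single i 1 : ι → ℝ) ∈ LinearMap.ker L := htop ▸ Submodule.mem_top
  simp [L, hij.symm] at hsingle

def simplicialCone (N : Matrix ι ι ℝ) : Set (ι → ℝ) := (N *ᵥ ·) ⁻¹' univ.pi fun _ => Ioi 0

theorem measurableSet_simplicialCone (N : Matrix ι ι ℝ) : MeasurableSet (simplicialCone N) :=
  (MeasurableSet.univ_pi fun _ => measurableSet_Ioi).preimage
    (continuous_const.matrix_mulVec continuous_id).measurable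

variable [DecidableEq ι]

theorem measurePreserving_mulVec {N : Matrix ι ι ℝ} (hN : |N.det| = 1) :
    MeasurePreserving (N *ᵥ ·) volume volume := by
  change MeasurePreserving (toLin' N) volume volume
  refine ⟨(LinearMap.continuous_of_finiteDimensional _).measurable, ?_⟩
  rw [Real.map_matrix_volume_pi_eq_smul_volume_pi (by simp [← abs_ne_zero, hN]), abs_inv, hN]
  simp

variable {M N : Matrix ι ι ℝ} (hMN : M * N = 1)
include hMN

theorem measurableEmbedding_mulVec : MeasurableEmbedding (N *ᵥ ·) := by
  have hinv : Function.LeftInverse (M *ᵥ ·) (N *ᵥ ·) := fun p => by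
    simp [mulVec_mulVec, hMN]
  exact (continuous_const.matrix_mulVec continuous_id).measurableEmbedding hinv.injective

theorem dotProduct_eq_vecMul_dotProduct_mulVec (k p : ι → ℝ) :
    k ⬝ᵥ p = (k ᵥ* M) ⬝ᵥ (N *ᵥ p) := by
  rw [← dotProduct_mulVec, mulVec_mulVec, hMN, one_mulVec]

variable (hN : |N.det| = 1) {k : ι → ℝ}
include hN

theorem integrableOn_exp_neg_dotProduct_simplicialCone (hk : ∀ i, 0 < (k ᵥ* M) i) :
    IntegrableOn (fun p => Real.exp (-(k ⬝ᵥ p))) (simplicialCone N) := by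
  simp_rw [dotProduct_eq_vecMul_dotProduct_mulVec hMN k]
  exact (measurePreserving_mulVec hN).integrableOn_comp_preimage
    (measurableEmbedding_mulVec hMN) |>.2 (integrableOn_exp_neg_dotProduct_pi_Ioi hk)

theorem integral_exp_neg_dotProduct_simplicialCone (hk : ∀ i, 0 < (k ᵥ* M) i) :
    ∫ p in simplicialCone N, Real.exp (-(k ⬝ᵥ p)) = ∏ i, ((k ᵥ* M) i)⁻¹ := by
  simp_rw [dotProduct_eq_vecMul_dotProduct_mulVec hMN k]
  rw [simplicialCone, (measurePreserving_mulVec hN).setIntegral_preimage_emb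
    (measurableEmbedding_mulVec hMN) (fun q => Real.exp (-((k ᵥ* M) ⬝ᵥ q))),
    integral_exp_neg_dotProduct_pi_Ioi hk]

end

namespace Bipyramid

def cone : Set (Fin 4 → ℝ) :=
  {p | 0 < p 0 ∧ 0 < p 1 ∧ 0 < p 2 ∧ 0 < p 3 ∧ 0 < p 1 - p 2 + p 3 ∧ 0 < p 0 - p 2 + p 3}

def lowerRays : Matrix (Fin 4) (Fin 4) ℝ := !![1, 0, 0, 0; 0, 1, 0, 0; 0, 0, 1, 0; 0, 0, 1, 1]

def lowerCoords : Matrix (Fin 4) (Fin 4) ℝ := !![1, 0, 0, 0; 0, 1, 0, 0; 0, 0, 1, 0; 0, 0, -1, 1]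

def upperRays : Matrix (Fin 4) (Fin 4) ℝ := !![1, 0, 1, 0; 0, 1, 1, 0; 0, 0, 1, 1; 0, 0, 0, 1]

def upperCoords : Matrix (Fin 4) (Fin 4) ℝ :=
  !![1, 0, -1, 1; 0, 1, -1, 1; 0, 0, 1, -1; 0, 0, 0, 1]

theorem lowerRays_mul_lowerCoords : lowerRays * lowerCoords = 1 := by
  ext i j
  fin_cases i <;> fin_cases j <;> simp [lowerRays, lowerCoords, mul_apply, Fin.sum_univ_four]

theorem upperRays_mul_upperCoords : upperRays * upperCoords = 1 := by
  ext i j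
  fin_cases i <;> fin_cases j <;> simp [upperRays, upperCoords, mul_apply, Fin.sum_univ_four]

theorem abs_det_lowerCoords : |lowerCoords.det| = 1 := by
  simp [lowerCoords, det_succ_row_zero, Fin.sum_univ_succ]

theorem abs_det_upperCoords : |upperCoords.det| = 1 := by
  simp [upperCoords, det_succ_row_zero, Fin.sum_univ_succ]

theorem vecMul_lowerRays (a b c d : ℝ) : ![a, b, c, d] ᵥ* lowerRays = ![a, b, c + d, d] := by
  ext j; fin_cases j <;> simp [lowerRays, vecMul, dotProduct, Fin.sum_univ_four]

theorem vecMul_upperRays (a b c d : ℝ) :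
    ![a, b, c, d] ᵥ* upperRays = ![a, b, a + b + c, c + d] := by
  ext j; fin_cases j <;> simp [upperRays, vecMul, dotProduct, Fin.sum_univ_four]

theorem mem_simplicialCone_lowerCoords {p : Fin 4 → ℝ} :
    p ∈ simplicialCone lowerCoords ↔ 0 < p 0 ∧ 0 < p 1 ∧ 0 < p 2 ∧ p 2 < p 3 := by
  simp [simplicialCone, lowerCoords, Fin.forall_fin_succ, dotProduct, Fin.sum_univ_four]

theorem mem_simplicialCone_upperCoords {p : Fin 4 → ℝ} :
    p ∈ simplicialCone upperCoords ↔
      0 < p 3 ∧ p 3 < p 2 ∧ p 2 < p 0 + p 3 ∧ p 2 < p 1 + p 3 := by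
  simp only [simplicialCone, upperCoords, mem_preimage, mem_univ_pi, mem_Ioi, Fin.forall_fin_succ,
    cons_mulVec, dotProduct, Fin.sum_univ_four, cons_val_zero, cons_val_one, cons_val_succ, cons_val,
    cons_val_fin_one, empty_mulVec]
  grind

theorem disjoint_simplicialCone_lowerCoords_upperCoords :
    Disjoint (simplicialCone lowerCoords) (simplicialCone upperCoords) := by
  refine Set.disjoint_left.2 fun p hlow hup => ?_
  rw [mem_simplicialCone_lowerCoords] at hlow
  rw [mem_simplicialCone_upperCoords] at hup
  linarith [hlow.2.2.2, hup.2.1]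

theorem union_simplicialCone_ae_eq_cone :
    (simplicialCone lowerCoords ∪ simplicialCone upperCoords : Set _) =ᵐ[volume] cone := by
  have hsplit : simplicialCone lowerCoords ∪ simplicialCone upperCoords
      = cone ∩ {p | p 2 = p 3}ᶜ := by
    ext p
    simp only [mem_union, mem_simplicialCone_lowerCoords, mem_simplicialCone_upperCoords, cone,
      mem_inter_iff, mem_compl_iff, mem_ofPred_eq]
    grind
  rw [hsplit]
  exact inter_ae_eq_left_of_ae_eq_univ <| ae_eq_univ.2 <| by
    simpa using volume_setOf_apply_eq_apply (by decide : (2 : Fin 4) ≠ 3)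

end Bipyramid

open Bipyramid in
/-- The contribution of the bipyramid collection to the (3,6) generalized biadjoint
amplitude: the integral of `exp (-(a x + b y + c z + d w))` over the open cone of
compatible metrics equals `1/(a b (a+b+c)(c+d)) + 1/(a b d (c+d))`. -/
theorem bipyramid_amplitude
    (a b c d : ℝ) (ha : 0 < a) (hb : 0 < b) (hd : 0 < d)
    (hcd : 0 < c + d) (habc : 0 < a + b + c) :
    (∫ p in {p : Fin 4 → ℝ | 0 < p 0 ∧ 0 < p 1 ∧ 0 < p 2 ∧ 0 < p 3 ∧
        0 < p 1 - p 2 + p 3 ∧ 0 < p 0 - p 2 + p 3},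
      Real.exp (-(a * p 0 + b * p 1 + c * p 2 + d * p 3)))
    = 1 / (a * b * (a + b + c) * (c + d)) + 1 / (a * b * d * (c + d)) := by
  set k : Fin 4 → ℝ := ![a, b, c, d]
  have hk : ∀ p : Fin 4 → ℝ, a * p 0 + b * p 1 + c * p 2 + d * p 3 = k ⬝ᵥ p := by
    simp [k, dotProduct, Fin.sum_univ_four]
  have hlow : ∀ i, 0 < (k ᵥ* lowerRays) i := by
    simp [k, vecMul_lowerRays, Fin.forall_fin_succ, ha, hb, hd, hcd]
  have hup : ∀ i, 0 < (k ᵥ* upperRays) i := by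
    simp [k, vecMul_upperRays, Fin.forall_fin_succ, ha, hb, habc, hcd]
  change ∫ p in cone, _ = _
  simp_rw [hk]
  rw [← setIntegral_congr_set union_simplicialCone_ae_eq_cone,
    setIntegral_union disjoint_simplicialCone_lowerCoords_upperCoords
      (measurableSet_simplicialCone _)
      (integrableOn_exp_neg_dotProduct_simplicialCone lowerRays_mul_lowerCoords
        abs_det_lowerCoords hlow)
      (integrableOn_exp_neg_dotProduct_simplicialCone upperRays_mul_upperCoords
        abs_det_upperCoords hup),
    integral_exp_neg_dotProduct_simplicialCone lowerRays_mul_lowerCoords abs_det_lowerCoords hlow,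
    integral_exp_neg_dotProduct_simplicialCone upperRays_mul_upperCoords abs_det_upperCoords hup,
    vecMul_lowerRays, vecMul_upperRays]
  simp only [Fin.prod_univ_four, cons_val_zero, cons_val_one, cons_val, one_div]
  field_simp
  ring
end

section
/- Let n ≥ 1, let s : Fin n → Fin n → Fin n → ℝ be (3,n) generalized Mandelstam invariants, and let a, b be two distinct elements of Fin n, with S = Fin n \ {a, b}. Then the sum of s(p, q, r) over all 3-element subsets {p, q, r} of S equals the sum over x ∈ S of s(x, a, b). -/
/-!
Write `s(A, B, C)` for the sum of `s i j k` over `A × B × C` and `P = {a, b}` for the complement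
of `S`. Momentum conservation says `s(X, U, U) = 0` for every `X`, where `U = S ⊔ P` is the whole
index set; expanding `s(S, U, U)` and `s(P, U, U)` and using the symmetry of `s` gives
`s(S, S, S) = 3 s(S, P, P) + 2 s(P, P, P)`. As `s` vanishes when two labels coincide,
`s(P, P, P) = 0` and `s(S, P, P) = 2 ∑_{x ∈ S} s(x, a, b)`, while `s(S, S, S)` is six times the
sum over the increasing triples of `S`.
-/

open Finset

namespace Mandelstam

variable {ι M : Type*}

def blockSum [AddCommMonoid M] (F : ι → ι → ι → M) (A B C : Finset ι) : M :=
  ∑ i ∈ A, ∑ j ∈ B, ∑ k ∈ C, F i j k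

section Symmetric

variable [AddCommMonoid M]

theorem blockSum_comm₁₂ (F : ι → ι → ι → M) (A B C : Finset ι) :
    blockSum F A B C = blockSum (fun i j k => F j i k) B A C :=
  sum_comm

theorem blockSum_comm₂₃ (F : ι → ι → ι → M) (A B C : Finset ι) :
    blockSum F A B C = blockSum (fun i j k => F i k j) A C B :=
  sum_congr rfl fun _ _ => sum_comm

variable {s : ι → ι → ι → M}

theorem blockSum_swap₁₂ (hsym1 : ∀ i j k, s i j k = s j i k) (A B C : Finset ι) :
    blockSum s A B C = blockSum s B A C := by
  rw [blockSum_comm₁₂]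
  simp only [← hsym1]

theorem blockSum_swap₂₃ (hsym2 : ∀ i j k, s i j k = s i k j) (A B C : Finset ι) :
    blockSum s A B C = blockSum s A C B := by
  rw [blockSum_comm₂₃]
  simp only [← hsym2]

theorem apply_self₂₃ (hsym1 : ∀ i j k, s i j k = s j i k) (hsym2 : ∀ i j k, s i j k = s i k j)
    (hdiag : ∀ i j, s i i j = 0) (i j : ι) : s i j j = 0 := by
  rw [hsym1, hsym2, hdiag]

theorem apply_self₁₃ (hsym2 : ∀ i j k, s i j k = s i k j) (hdiag : ∀ i j, s i i j = 0)
    (i j : ι) : s i j i = 0 := by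
  rw [hsym2, hdiag]

theorem blockSum_pair_pair [DecidableEq ι] (hsym1 : ∀ i j k, s i j k = s j i k)
    (hsym2 : ∀ i j k, s i j k = s i k j) (hdiag : ∀ i j, s i i j = 0)
    {a b : ι} (hab : a ≠ b) (A : Finset ι) :
    blockSum s A {a, b} {a, b} = 2 • ∑ x ∈ A, s x a b := by
  simp only [blockSum, sum_pair hab, apply_self₂₃ hsym1 hsym2 hdiag, ← hsym2 _ a b, zero_add,
    add_zero, two_nsmul, sum_add_distrib]

theorem blockSum_pair_pair_pair [DecidableEq ι] (hsym1 : ∀ i j k, s i j k = s j i k)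
    (hsym2 : ∀ i j k, s i j k = s i k j) (hdiag : ∀ i j, s i i j = 0) {a b : ι} (hab : a ≠ b) :
    blockSum s {a, b} {a, b} {a, b} = 0 := by
  simp only [blockSum, sum_pair hab, hdiag, apply_self₂₃ hsym1 hsym2 hdiag,
    apply_self₁₃ hsym2 hdiag, add_zero]

end Symmetric

section Momentum

variable [Fintype ι] [AddCommGroup M] {s : ι → ι → ι → M}

theorem blockSum_add_compl₂ [DecidableEq ι] (A B C : Finset ι) :
    blockSum s A B C + blockSum s A Bᶜ C = blockSum s A univ C := by
  simp only [blockSum, ← sum_add_distrib, sum_add_sum_compl]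

theorem blockSum_add_compl₃ [DecidableEq ι] (A B C : Finset ι) :
    blockSum s A B C + blockSum s A B Cᶜ = blockSum s A B univ := by
  simp only [blockSum, ← sum_add_distrib, sum_add_sum_compl]

theorem blockSum_univ_univ (hmom : ∀ i, ∑ j, ∑ k, s i j k = 0) (A : Finset ι) :
    blockSum s A univ univ = 0 :=
  sum_eq_zero fun i _ => hmom i

theorem blockSum_add_two_nsmul_add_eq_zero [DecidableEq ι] (hsym2 : ∀ i j k, s i j k = s i k j)
    (hmom : ∀ i, ∑ j, ∑ k, s i j k = 0) (A S : Finset ι) :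
    blockSum s A S S + 2 • blockSum s A S Sᶜ + blockSum s A Sᶜ Sᶜ = 0 := by
  have h := blockSum_univ_univ hmom A
  rw [← blockSum_add_compl₂ (B := S), ← blockSum_add_compl₃ (C := S),
    ← blockSum_add_compl₃ (C := S), blockSum_swap₂₃ hsym2 A Sᶜ S] at h
  rw [← h, two_nsmul]
  abel

theorem blockSum_cube [DecidableEq ι] (hsym1 : ∀ i j k, s i j k = s j i k)
    (hsym2 : ∀ i j k, s i j k = s i k j) (hmom : ∀ i, ∑ j, ∑ k, s i j k = 0) (S : Finset ι) :
    blockSum s S S S = 3 • blockSum s S Sᶜ Sᶜ + 2 • blockSum s Sᶜ Sᶜ Sᶜ := by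
  have hS := blockSum_add_two_nsmul_add_eq_zero hsym2 hmom S S
  have hP := blockSum_add_two_nsmul_add_eq_zero hsym2 hmom Sᶜ S
  rw [blockSum_swap₂₃ hsym2 S S Sᶜ] at hS
  rw [blockSum_swap₁₂ hsym1 Sᶜ S Sᶜ, blockSum_swap₁₂ hsym1 Sᶜ S S] at hP
  linear_combination (norm := module) hS - 2 • hP

end Momentum

section Ordered

variable [LinearOrder ι] [AddCommMonoid M]

def orderedPart (F : ι → ι → ι → M) (i j k : ι) : M :=
  if i < j ∧ j < k then F i j k else 0

theorem eq_sum_orderedPart_perm {s : ι → ι → ι → M} (hsym1 : ∀ i j k, s i j k = s j i k)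
    (hsym2 : ∀ i j k, s i j k = s i k j) (hdiag : ∀ i j, s i i j = 0) (i j k : ι) :
    s i j k = orderedPart s i j k + orderedPart s i k j + orderedPart s j i k +
      orderedPart s j k i + orderedPart s k i j + orderedPart s k j i := by
  have hikj : s i k j = s i j k := (hsym2 i j k).symm
  have hjik : s j i k = s i j k := (hsym1 i j k).symm
  have hjki : s j k i = s i j k := by rw [← hsym2, ← hsym1]
  have hkij : s k i j = s i j k := by rw [← hsym1, ← hsym2]
  have hkji : s k j i = s i j k := by rw [hsym1, hsym2, hsym1]
  simp only [orderedPart, hikj, hjik, hjki, hkij, hkji]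
  by_cases hcoinc : i = j ∨ j = k ∨ i = k
  · have hzero : s i j k = 0 := by
      rcases hcoinc with rfl | rfl | rfl
      exacts [hdiag i k, apply_self₂₃ hsym1 hsym2 hdiag i j, apply_self₁₃ hsym2 hdiag i j]
    simp [hzero]
  · obtain ⟨hij, hjk, hik⟩ : i ≠ j ∧ j ≠ k ∧ i ≠ k := by tauto
    -- exactly one of the six orderings of three distinct labels holds
    rcases hij.lt_or_gt with hij | hij <;> rcases hjk.lt_or_gt with hjk | hjk <;>
      rcases hik.lt_or_gt with hik | hik <;>
      first
      | (exfalso; order)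
      | simp [hij, hjk, hik, hij.not_gt, hjk.not_gt, hik.not_gt]

theorem blockSum_eq_six_nsmul_orderedPart {s : ι → ι → ι → M}
    (hsym1 : ∀ i j k, s i j k = s j i k) (hsym2 : ∀ i j k, s i j k = s i k j)
    (hdiag : ∀ i j, s i i j = 0) (S : Finset ι) :
    blockSum s S S S = 6 • blockSum (orderedPart s) S S S := by
  set o := orderedPart s
  have hikj := blockSum_comm₂₃ o S S S
  have hjik := blockSum_comm₁₂ o S S S
  have hjki := hikj.trans (blockSum_comm₁₂ _ S S S)
  have hkij := hjik.trans (blockSum_comm₂₃ _ S S S)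
  have hkji := hjki.trans (blockSum_comm₂₃ _ S S S)
  calc blockSum s S S S
      = blockSum (fun i j k => o i j k + o i k j + o j i k + o j k i + o k i j + o k j i)
          S S S := by
        simp only [o, ← eq_sum_orderedPart_perm hsym1 hsym2 hdiag]
    _ = blockSum o S S S + blockSum (fun i j k => o i k j) S S S +
          blockSum (fun i j k => o j i k) S S S + blockSum (fun i j k => o j k i) S S S +
          blockSum (fun i j k => o k i j) S S S + blockSum (fun i j k => o k j i) S S S := by
        simp only [blockSum, sum_add_distrib]
    _ = 6 • blockSum o S S S := by
        rw [← hikj, ← hjik, ← hjki, ← hkij, ← hkji]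
        simp only [succ_nsmul, zero_nsmul, zero_add]

end Ordered

end Mandelstam

open Mandelstam

theorem sum_mandelstam_over_complement_triples_general
    (n : ℕ)
    (s : Fin n → Fin n → Fin n → ℝ)
    (hsym1 : ∀ i j k, s i j k = s j i k)
    (hsym2 : ∀ i j k, s i j k = s i k j)
    (hdiag : ∀ i j, s i i j = 0)
    (hmom : ∀ i, (∑ j : Fin n, ∑ k : Fin n, s i j k) = 0)
    (a b : Fin n) (hab : a ≠ b) :
    (∑ i : Fin n, ∑ j : Fin n, ∑ k : Fin n,
      if i < j ∧ j < k ∧ i ≠ a ∧ i ≠ b ∧ j ≠ a ∧ j ≠ b ∧ k ≠ a ∧ k ≠ b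
      then s i j k else 0)
    = ∑ x ∈ Finset.univ.filter (fun x : Fin n => x ≠ a ∧ x ≠ b), s x a b := by
  set S := Finset.univ.filter (fun x : Fin n => x ≠ a ∧ x ≠ b)
  have hSc : Sᶜ = {a, b} := by
    ext x
    simp [S, or_iff_not_and_not]
  have hlhs : (∑ i : Fin n, ∑ j : Fin n, ∑ k : Fin n,
      if i < j ∧ j < k ∧ i ≠ a ∧ i ≠ b ∧ j ≠ a ∧ j ≠ b ∧ k ≠ a ∧ k ≠ b
      then s i j k else 0) = blockSum (orderedPart s) S S S := by
    simp only [blockSum, orderedPart, S, sum_filter, ite_sum_zero]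
    congr! 3 with i _ j _ k _
    split_ifs <;> first | rfl | tauto
  have hcube := blockSum_cube hsym1 hsym2 hmom S
  rw [hSc, blockSum_pair_pair hsym1 hsym2 hdiag hab,
    blockSum_pair_pair_pair hsym1 hsym2 hdiag hab,
    blockSum_eq_six_nsmul_orderedPart hsym1 hsym2 hdiag] at hcube
  simp only [nsmul_eq_mul, Nat.cast_ofNat, smul_zero, add_zero] at hcube
  rw [hlhs]
  linarith

/-- For (3,n) generalized Mandelstam invariants and distinct labels `a ≠ b`, the sum of
`s p q r` over all 3-element subsets `{p, q, r}` of `S = Fin n \ {a, b}` equals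
`∑ x ∈ S, s x a b`. -/
theorem sum_mandelstam_over_complement_triples
    (n : ℕ) (hn : 1 ≤ n)
    (s : Fin n → Fin n → Fin n → ℝ)
    (hsym1 : ∀ i j k, s i j k = s j i k)
    (hsym2 : ∀ i j k, s i j k = s i k j)
    (hdiag : ∀ i j, s i i j = 0)
    (hmom : ∀ i, (∑ j : Fin n, ∑ k : Fin n, s i j k) = 0)
    (a b : Fin n) (hab : a ≠ b) :
    (∑ i : Fin n, ∑ j : Fin n, ∑ k : Fin n,
      if i < j ∧ j < k ∧ i ≠ a ∧ i ≠ b ∧ j ≠ a ∧ j ≠ b ∧ k ≠ a ∧ k ≠ b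
      then s i j k else 0)
    = ∑ x ∈ Finset.univ.filter (fun x : Fin n => x ≠ a ∧ x ≠ b), s x a b :=
  sum_mandelstam_over_complement_triples_general n s hsym1 hsym2 hdiag hmom a b hab
end
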